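/- Fix integers T ≥ 1 and n ≥ 1, matrices A_t ∈ ℝ^{n×n} and symmetric positive definite W_t (t = 0,…,T−1), a symmetric positive definite P_0, and symmetric positive semidefinite Θ_t and reals D_t > 0 (t = 1,…,T). Then the infimum of the nested objective J₁(P_1,…,P_T) = Σ_{t=1}^{T} [½ log det(A_{t−1} P_{t−1} A_{t−1}ᵀ + W_{t−1}) − ½ log det P_t] over the nested feasible set G equals the infimum of the max-det objective J(Π_1,…,Π_T) = −Σ_{t=1}^{T} ½ log det Π_t + c over the max-det feasible set F. -/

import Mathlib

open Matrix

/-- The nested feasible set `G`: sequences `P` with `P 0 = P₀`,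
`0 ≺ P t ⪯ A (t−1) * P (t−1) * (A (t−1))ᵀ + W (t−1)` and `Tr(Θ t * P t) ≤ D t`
for `t = 1, …, T`. -/
def nestedFeasible (n T : ℕ) (A W Θ : ℕ → Matrix (Fin n) (Fin n) ℝ)
    (P₀ : Matrix (Fin n) (Fin n) ℝ) (D : ℕ → ℝ) :
    Set (ℕ → Matrix (Fin n) (Fin n) ℝ) :=
  {P | P 0 = P₀ ∧ ∀ t, 1 ≤ t → t ≤ T →
    (P t).PosDef ∧
    (A (t - 1) * P (t - 1) * (A (t - 1))ᵀ + W (t - 1) - P t).PosSemidef ∧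
    (Θ t * P t).trace ≤ D t}

/-- The nested objective
`J₁(P) = Σ_{t=1}^{T} [½ log det (A (t−1) P (t−1) (A (t−1))ᵀ + W (t−1)) − ½ log det (P t)]`. -/
noncomputable def nestedObj (n T : ℕ) (A W : ℕ → Matrix (Fin n) (Fin n) ℝ)
    (P : ℕ → Matrix (Fin n) (Fin n) ℝ) : ℝ :=
  ∑ t ∈ Finset.Icc 1 T,
    ((1 / 2) * Real.log (A (t - 1) * P (t - 1) * (A (t - 1))ᵀ + W (t - 1)).det -
      (1 / 2) * Real.log (P t).det)

/-- The max-det feasible set `F`: pairs of sequences `(P, Π)` with `P 0 = P₀`,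
`Π t ≻ 0` for `t = 1, …, T`, `P (t+1) ⪯ A t * P t * (A t)ᵀ + W t` for `t = 0, …, T−1`,
the block LMI for `t = 1, …, T−1`, `Tr(Θ t * P t) ≤ D t` for `t = 1, …, T`, and
`P T = Π T`. -/
def maxdetFeasible (n T : ℕ) (A W Θ : ℕ → Matrix (Fin n) (Fin n) ℝ)
    (P₀ : Matrix (Fin n) (Fin n) ℝ) (D : ℕ → ℝ) :
    Set ((ℕ → Matrix (Fin n) (Fin n) ℝ) × (ℕ → Matrix (Fin n) (Fin n) ℝ)) :=
  {PQ | PQ.1 0 = P₀ ∧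
    (∀ t, 1 ≤ t → t ≤ T → (PQ.2 t).PosDef) ∧
    (∀ t, t < T → (A t * PQ.1 t * (A t)ᵀ + W t - PQ.1 (t + 1)).PosSemidef) ∧
    (∀ t, 1 ≤ t → t < T →
      (fromBlocks (PQ.1 t - PQ.2 t) (PQ.1 t * (A t)ᵀ) (A t * PQ.1 t)
        (W t + A t * PQ.1 t * (A t)ᵀ)).PosSemidef) ∧
    (∀ t, 1 ≤ t → t ≤ T → (Θ t * PQ.1 t).trace ≤ D t) ∧
    PQ.1 T = PQ.2 T}

/-- The constant `c = ½ log det (A 0 P₀ (A 0)ᵀ + W 0) + Σ_{t=1}^{T−1} ½ log det (W t)`. -/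
noncomputable def maxdetConst (n T : ℕ) (A W : ℕ → Matrix (Fin n) (Fin n) ℝ)
    (P₀ : Matrix (Fin n) (Fin n) ℝ) : ℝ :=
  (1 / 2) * Real.log (A 0 * P₀ * (A 0)ᵀ + W 0).det +
    ∑ t ∈ Finset.Ico 1 T, (1 / 2) * Real.log (W t).det

/-- The max-det objective `J(Π) = −Σ_{t=1}^{T} ½ log det (Π t) + c`. -/
noncomputable def maxdetObj (n T : ℕ) (A W : ℕ → Matrix (Fin n) (Fin n) ℝ)
    (P₀ : Matrix (Fin n) (Fin n) ℝ) (Q : ℕ → Matrix (Fin n) (Fin n) ℝ) : ℝ :=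
  -∑ t ∈ Finset.Icc 1 T, (1 / 2) * Real.log (Q t).det + maxdetConst n T A W P₀

/-!
For `P ≻ 0` and `W ≻ 0`, the Schur complement of the invertible block `W + A P Aᵀ` shows that the
block LMI of `F` at `(P, Π)` holds iff `Π ⪯ condCov A P W = P - P Aᵀ (W + A P Aᵀ)⁻¹ A P`, and
expanding the determinant of the same block matrix along either diagonal block gives
`det (condCov A P W) · det (A P Aᵀ + W) = det P · det W`. Hence, for `(P, Π) ∈ F`, the gap
`J(Π) - J₁(P)` is a sum of terms `½ (log det (condCov Aₜ Pₜ Wₜ) - log det Πₜ) ≥ 0`, by monotonicity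
of `det` in the Loewner order, while `Πₜ := condCov Aₜ Pₜ Wₜ` (`t < T`), `Π_T := P_T` lifts every
`P ∈ G` to a point of `F` with zero gap. Two sets of reals related this way have the same
infimum, bounded, empty or not.
-/

namespace Matrix

variable {m k : Type*} [Fintype m] [Fintype k]

section LoewnerOrder

open scoped MatrixOrder

variable [DecidableEq m]

lemma one_le_det_of_one_le {Z : Matrix m m ℝ} (h : 1 ≤ Z) : 1 ≤ Z.det := by
  have hZ : Z.IsHermitian := by
    simpa using (le_iff.mp h).isHermitian.add isHermitian_one
  have hspec : ∀ x ∈ spectrum ℝ Z, 1 ≤ x :=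
    (algebraMap_le_iff_le_spectrum (r := (1 : ℝ)) hZ.isSelfAdjoint).mp (by simpa using h)
  rw [hZ.det_eq_prod_eigenvalues]
  simpa using Finset.prod_le_prod (s := Finset.univ) (fun _ _ => zero_le_one)
    (fun i _ => hspec _ (hZ.eigenvalues_mem_spectrum_real i))

lemma det_le_det_of_le {X Y : Matrix m m ℝ} (hX : X.PosDef) (h : X ≤ Y) : X.det ≤ Y.det := by
  -- With `X = Bᴴ B`, conjugating by `B⁻¹` reduces to `1 ≤ B⁻ᴴ Y B⁻¹`, whose det is `det Y / det X`.
  obtain ⟨B, rfl⟩ := CStarAlgebra.nonneg_iff_eq_star_mul_self.mp hX.posSemidef.nonneg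
  have hB : IsUnit B.det := by
    have := hX.det_pos.ne'
    rw [det_mul] at this
    exact (right_ne_zero_of_mul this).isUnit
  have hBC : B * B⁻¹ = 1 := mul_nonsing_inv B hB
  have hCB : B⁻¹ * B = 1 := nonsing_inv_mul B hB
  have hZ : 1 ≤ star B⁻¹ * Y * B⁻¹ := by
    have := star_left_conjugate_le_conjugate h B⁻¹
    rwa [← mul_assoc, ← star_mul, mul_assoc, hBC, star_one, one_mul] at this
  have hY : Y = star B * (star B⁻¹ * Y * B⁻¹) * B := by
    rw [← mul_assoc, ← mul_assoc, ← star_mul, hCB, star_one, one_mul, mul_assoc, hCB, mul_one]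
  calc (star B * B).det = (star B * B).det * 1 := (mul_one _).symm
    _ ≤ (star B * B).det * (star B⁻¹ * Y * B⁻¹).det :=
        mul_le_mul_of_nonneg_left (one_le_det_of_one_le hZ) hX.det_pos.le
    _ = Y.det := by
        conv_rhs => rw [hY]
        simp only [det_mul]; ring

end LoewnerOrder

variable [DecidableEq k]

/-- The conditional covariance of `x ~ 𝒩(0, P)` given the observation `A x + w`,
where `w ~ 𝒩(0, W)` is independent of `x`. -/
noncomputable def condCov (A : Matrix k m ℝ) (P : Matrix m m ℝ) (W : Matrix k k ℝ) :
    Matrix m m ℝ :=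
  P - P * Aᵀ * (W + A * P * Aᵀ)⁻¹ * (A * P)

omit [DecidableEq k] in
lemma PosDef.add_mul_mul_transpose {W : Matrix k k ℝ} {P : Matrix m m ℝ} (hW : W.PosDef)
    (hP : P.PosSemidef) (A : Matrix k m ℝ) : (W + A * P * Aᵀ).PosDef := by
  simpa using hW.add_posSemidef (hP.mul_mul_conjTranspose_same A)

omit [Fintype k] [DecidableEq k] in
lemma IsHermitian.conjTranspose_mul_transpose {P : Matrix m m ℝ}
    (hP : P.IsHermitian) (A : Matrix k m ℝ) : (P * Aᵀ)ᴴ = A * P := by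
  rw [conjTranspose_mul, hP.eq, conjTranspose_eq_transpose_of_trivial, transpose_transpose]

lemma fromBlocks_posSemidef_iff_condCov {A : Matrix k m ℝ} {P Q : Matrix m m ℝ}
    {W : Matrix k k ℝ} (hP : P.PosSemidef) (hW : W.PosDef) :
    (fromBlocks (P - Q) (P * Aᵀ) (A * P) (W + A * P * Aᵀ)).PosSemidef ↔
      (condCov A P W - Q).PosSemidef := by
  have hS := hW.add_mul_mul_transpose hP A
  have : Invertible (W + A * P * Aᵀ) := hS.isUnit.invertible
  have hSchur := PosDef.fromBlocks₂₂ (P - Q) (P * Aᵀ) hS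
  rwa [hP.isHermitian.conjTranspose_mul_transpose A, sub_right_comm] at hSchur

lemma condCov_posSemidef [DecidableEq m] {A : Matrix k m ℝ} {P : Matrix m m ℝ}
    {W : Matrix k k ℝ} (hP : P.PosDef) (hW : W.PosDef) : (condCov A P W).PosSemidef := by
  have : Invertible P := hP.isUnit.invertible
  have hSchur := PosDef.fromBlocks₁₁ (P * Aᵀ) (W + A * P * Aᵀ) hP
  rw [hP.isHermitian.conjTranspose_mul_transpose A,
    mul_inv_cancel_right_of_invertible, ← Matrix.mul_assoc, add_sub_cancel_right] at hSchur
  simpa using (fromBlocks_posSemidef_iff_condCov (Q := 0) hP.posSemidef hW).mp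
    (by simpa using hSchur.mpr hW.posSemidef)

lemma det_condCov_mul [DecidableEq m] {A : Matrix k m ℝ} {P : Matrix m m ℝ}
    {W : Matrix k k ℝ} (hP : P.PosDef) (hW : W.PosDef) :
    (condCov A P W).det * (W + A * P * Aᵀ).det = P.det * W.det := by
  have : Invertible P := hP.isUnit.invertible
  have : Invertible (W + A * P * Aᵀ) :=
    (hW.add_mul_mul_transpose hP.posSemidef A).isUnit.invertible
  have h₁ := det_fromBlocks₁₁ P (P * Aᵀ) (A * P) (W + A * P * Aᵀ)
  have h₂ := det_fromBlocks₂₂ P (P * Aᵀ) (A * P) (W + A * P * Aᵀ)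
  rw [invOf_eq_nonsing_inv, mul_inv_cancel_right_of_invertible, ← Matrix.mul_assoc,
    add_sub_cancel_right] at h₁
  rw [invOf_eq_nonsing_inv] at h₂
  rw [condCov, mul_comm, ← h₂, h₁]

lemma condCov_posDef [DecidableEq m] {A : Matrix k m ℝ} {P : Matrix m m ℝ}
    {W : Matrix k k ℝ} (hP : P.PosDef) (hW : W.PosDef) : (condCov A P W).PosDef := by
  refine (condCov_posSemidef hP hW).posDef_iff_det_ne_zero.mpr fun h => ?_
  have := det_condCov_mul (A := A) hP hW
  rw [h, zero_mul] at this
  exact (mul_pos hP.det_pos hW.det_pos).ne this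

lemma log_det_condCov [DecidableEq m] {A : Matrix k m ℝ} {P : Matrix m m ℝ}
    {W : Matrix k k ℝ} (hP : P.PosDef) (hW : W.PosDef) :
    Real.log (condCov A P W).det =
      Real.log P.det + Real.log W.det - Real.log (A * P * Aᵀ + W).det := by
  have hlog := congrArg Real.log (det_condCov_mul (A := A) hP hW)
  rw [Real.log_mul (condCov_posDef hP hW).det_pos.ne'
      (hW.add_mul_mul_transpose hP.posSemidef A).det_pos.ne',
    Real.log_mul hP.det_pos.ne' hW.det_pos.ne', add_comm W] at hlog
  linarith

end Matrix

lemma Finset.sum_Icc_one_sub_one {M : Type*} [AddCommMonoid M] {T : ℕ} (hT : 1 ≤ T)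
    (f : ℕ → M) : ∑ t ∈ Icc 1 T, f (t - 1) = f 0 + ∑ t ∈ Ico 1 T, f t := by
  rw [← Ico_add_one_right_eq_Icc, sum_Ico_eq_sum_range, range_eq_Ico,
    sum_eq_sum_Ico_succ_bot (by omega)]
  simp

lemma maxdetObj_sub_nestedObj {n T : ℕ} (hT : 1 ≤ T) (A W : ℕ → Matrix (Fin n) (Fin n) ℝ)
    {P₀ : Matrix (Fin n) (Fin n) ℝ} {P Q : ℕ → Matrix (Fin n) (Fin n) ℝ} (hP0 : P 0 = P₀)
    (hQT : Q T = P T) :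
    maxdetObj n T A W P₀ Q - nestedObj n T A W P =
      ∑ t ∈ Finset.Ico 1 T, (1 / 2) * (Real.log (P t).det + Real.log (W t).det -
        Real.log (A t * P t * (A t)ᵀ + W t).det - Real.log (Q t).det) := by
  have htop : ∀ f : ℕ → ℝ, ∑ t ∈ Finset.Icc 1 T, f t = ∑ t ∈ Finset.Ico 1 T, f t + f T :=
    fun f => by rw [← Finset.Ico_add_one_right_eq_Icc, Finset.sum_Ico_succ_top hT]
  rw [maxdetObj, maxdetConst, nestedObj, Finset.sum_sub_distrib,
    Finset.sum_Icc_one_sub_one hT (fun t => (1 / 2) * Real.log (A t * P t * (A t)ᵀ + W t).det),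
    htop, htop, hQT, hP0]
  simp only [mul_add, mul_sub, Finset.sum_add_distrib, Finset.sum_sub_distrib]
  ring

section Feasibility

variable {n T : ℕ} {A W Θ : ℕ → Matrix (Fin n) (Fin n) ℝ} {P₀ : Matrix (Fin n) (Fin n) ℝ}
  {D : ℕ → ℝ}

lemma exists_mem_maxdetFeasible_of_mem_nestedFeasible (hT : 1 ≤ T)
    (hW : ∀ t, t < T → (W t).PosDef) {P : ℕ → Matrix (Fin n) (Fin n) ℝ}
    (hP : P ∈ nestedFeasible n T A W Θ P₀ D) :
    ∃ Q, (P, Q) ∈ maxdetFeasible n T A W Θ P₀ D ∧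
      maxdetObj n T A W P₀ Q = nestedObj n T A W P := by
  obtain ⟨hP0, hPt⟩ := hP
  set Q : ℕ → Matrix (Fin n) (Fin n) ℝ :=
    fun t => if t < T then condCov (A t) (P t) (W t) else P t
  have hQlt : ∀ t, t < T → Q t = condCov (A t) (P t) (W t) := fun t ht => if_pos ht
  have hQT : Q T = P T := if_neg (lt_irrefl T)
  refine ⟨Q, ⟨hP0, ?_, ?_, ?_, fun t h1 h2 => (hPt t h1 h2).2.2, hQT.symm⟩, ?_⟩
  · intro t h1 h2
    dsimp only
    rcases h2.lt_or_eq with ht | rfl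
    · rw [hQlt t ht]
      exact condCov_posDef (hPt t h1 h2).1 (hW t ht)
    · rw [hQT]
      exact (hPt _ h1 le_rfl).1
  · intro t ht
    simpa using (hPt (t + 1) (Nat.le_add_left 1 t) ht).2.1
  · intro t h1 ht
    dsimp only
    rw [hQlt t ht, fromBlocks_posSemidef_iff_condCov (hPt t h1 ht.le).1.posSemidef (hW t ht),
      sub_self]
    exact PosSemidef.zero
  · rw [← sub_eq_zero, maxdetObj_sub_nestedObj hT A W hP0 hQT]
    refine Finset.sum_eq_zero fun t hmem => ?_
    obtain ⟨h1, ht⟩ := Finset.mem_Ico.mp hmem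
    rw [hQlt t ht, log_det_condCov (hPt t h1 ht.le).1 (hW t ht)]
    ring

lemma mem_nestedFeasible_of_mem_maxdetFeasible
    {PQ : (ℕ → Matrix (Fin n) (Fin n) ℝ) × (ℕ → Matrix (Fin n) (Fin n) ℝ)}
    (h : PQ ∈ maxdetFeasible n T A W Θ P₀ D) : PQ.1 ∈ nestedFeasible n T A W Θ P₀ D := by
  obtain ⟨h0, hQ, hmono, hlmi, htr, hPT⟩ := h
  refine ⟨h0, fun t h1 h2 => ⟨?_, ?_, htr t h1 h2⟩⟩
  · rcases h2.lt_or_eq with ht | rfl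
    · have hgap : (PQ.1 t - PQ.2 t).PosSemidef := (hlmi t h1 ht).submatrix Sum.inl
      simpa using (hQ t h1 h2).add_posSemidef hgap
    · rw [hPT]
      exact hQ _ h1 le_rfl
  · simpa [Nat.sub_add_cancel h1] using hmono (t - 1) (by omega)

lemma nestedObj_le_maxdetObj (hT : 1 ≤ T) (hW : ∀ t, t < T → (W t).PosDef)
    {PQ : (ℕ → Matrix (Fin n) (Fin n) ℝ) × (ℕ → Matrix (Fin n) (Fin n) ℝ)}
    (h : PQ ∈ maxdetFeasible n T A W Θ P₀ D) :
    nestedObj n T A W PQ.1 ≤ maxdetObj n T A W P₀ PQ.2 := by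
  have hP := mem_nestedFeasible_of_mem_maxdetFeasible h
  obtain ⟨h0, hQ, -, hlmi, -, hPT⟩ := h
  rw [← sub_nonneg, maxdetObj_sub_nestedObj hT A W h0 hPT.symm]
  refine Finset.sum_nonneg fun t hmem => ?_
  obtain ⟨h1, ht⟩ := Finset.mem_Ico.mp hmem
  have hPt := (hP.2 t h1 ht.le).1
  have hdet : (PQ.2 t).det ≤ (condCov (A t) (PQ.1 t) (W t)).det :=
    det_le_det_of_le (hQ t h1 ht.le)
      ((fromBlocks_posSemidef_iff_condCov hPt.posSemidef (hW t ht)).mp (hlmi t h1 ht))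
  have hlog := Real.log_le_log (hQ t h1 ht.le).det_pos hdet
  rw [log_det_condCov hPt (hW t ht)] at hlog
  linarith

end Feasibility

theorem nested_eq_maxdet_general (n T : ℕ) (hT : 1 ≤ T)
    (A W Θ : ℕ → Matrix (Fin n) (Fin n) ℝ) (P₀ : Matrix (Fin n) (Fin n) ℝ)
    (D : ℕ → ℝ)
    (hW : ∀ t, t < T → (W t).PosDef) :
    sInf (nestedObj n T A W '' nestedFeasible n T A W Θ P₀ D) =
      sInf ((fun PQ => maxdetObj n T A W P₀ PQ.2) ''
        maxdetFeasible n T A W Θ P₀ D) := by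
  refine csInf_eq_csInf_of_forall_exists_le ?_ ?_
  · rintro _ ⟨P, hP, rfl⟩
    obtain ⟨Q, hPQ, hobj⟩ := exists_mem_maxdetFeasible_of_mem_nestedFeasible hT hW hP
    exact ⟨_, ⟨(P, Q), hPQ, rfl⟩, hobj.le⟩
  · rintro _ ⟨PQ, hPQ, rfl⟩
    exact ⟨_, ⟨PQ.1, mem_nestedFeasible_of_mem_maxdetFeasible hPQ, rfl⟩,
      nestedObj_le_maxdetObj hT hW hPQ⟩

/-- The infimum of the nested objective over the nested feasible set
equals the infimum of the max-det objective over the max-det feasible set. -/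
theorem nested_eq_maxdet (n T : ℕ) (hn : 0 < n) (hT : 1 ≤ T)
    (A W Θ : ℕ → Matrix (Fin n) (Fin n) ℝ) (P₀ : Matrix (Fin n) (Fin n) ℝ)
    (D : ℕ → ℝ)
    (hW : ∀ t, t < T → (W t).PosDef) (hP₀ : P₀.PosDef)
    (hΘ : ∀ t, 1 ≤ t → t ≤ T → (Θ t).PosSemidef)
    (hD : ∀ t, 1 ≤ t → t ≤ T → 0 < D t) :
    sInf (nestedObj n T A W '' nestedFeasible n T A W Θ P₀ D) =
      sInf ((fun PQ => maxdetObj n T A W P₀ PQ.2) ''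
        maxdetFeasible n T A W Θ P₀ D) :=
  nested_eq_maxdet_general n T hT A W Θ P₀ D hW
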